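/- Let P_n = p_1 p_2 ⋯ p_n denote the n-th primorial. For every positive integer m with m < P_n, one has φ̄(m) > φ̄(P_n). -/

import Mathlib

open Finset

/-- `φ̄ n = φ n / n`, as a rational-valued function. -/
def phiBar (n : ℕ) : ℚ := (Nat.totient n : ℚ) / n

/-- The sequence of primes in increasing order (0-indexed:
`nthPrime 0 = 2`, `nthPrime 1 = 3`, ...). -/
noncomputable def nthPrime (n : ℕ) : ℕ := Nat.nth Nat.Prime n

/-- The `n`-th primorial `P n = p_1 * p_2 * ⋯ * p_n`. -/
noncomputable def primorialSeq (n : ℕ) : ℕ := ∏ i ∈ Finset.range n, nthPrime i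

/-!
If `m` has `k` distinct prime factors, then its radical is a product of `k` distinct primes, so
`P_k ≤ rad m ≤ m < P_n` and `k < n`. Since `φ̄ m = ∏_{p ∣ m} (1 - 1/p)` and `1 - 1/p` increases
with `p`, replacing the prime factors of `m` by the first `k` primes can only decrease this product:
`φ̄ m ≥ φ̄ P_k`, and `φ̄ P_k > φ̄ P_n` because every further prime factor contributes a factor `< 1`.
-/

lemma nthPrime_prime (i : ℕ) : (nthPrime i).Prime := Nat.prime_nth_prime i

lemma nthPrime_injective : Function.Injective nthPrime :=
  Nat.nth_injective Nat.infinite_setOfPred_prime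

lemma nthPrime_card_le_of_forall_lt {s : Finset ℕ} {a : ℕ} (hs : ∀ p ∈ s, p.Prime)
    (ha : a.Prime) (hlt : ∀ p ∈ s, p < a) : nthPrime #s ≤ a := by
  have hcard : #s ≤ Nat.count Nat.Prime a := by
    rw [Nat.count_eq_card_filter_range]
    exact card_le_card fun p hp => mem_filter.2 ⟨mem_range.2 (hlt p hp), hs p hp⟩
  calc nthPrime #s ≤ Nat.nth Nat.Prime (Nat.count Nat.Prime a) :=
        Nat.nth_monotone Nat.infinite_setOfPred_prime hcard
    _ = a := Nat.nth_count ha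

lemma prod_range_nthPrime_le_prod {R : Type*} [CommSemiring R] [PartialOrder R] [IsOrderedRing R]
    {g : ℕ → R} (hmono : MonotoneOn g {p | p.Prime}) (hnonneg : ∀ p, p.Prime → 0 ≤ g p)
    (s : Finset ℕ) (hs : ∀ p ∈ s, p.Prime) :
    ∏ i ∈ range #s, g (nthPrime i) ≤ ∏ p ∈ s, g p := by
  induction s using Finset.induction_on_max with
  | empty => simp
  | insert a s hlt ih =>
    have ha : a.Prime := hs a (mem_insert_self a s)
    have hs' : ∀ p ∈ s, p.Prime := fun p hp => hs p (mem_insert_of_mem hp)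
    have has : a ∉ s := fun h => (hlt a h).false
    rw [card_insert_of_notMem has, prod_range_succ, prod_insert has, mul_comm (g a)]
    exact mul_le_mul (ih hs')
      (hmono (nthPrime_prime _) ha (nthPrime_card_le_of_forall_lt hs' ha hlt))
      (hnonneg _ (nthPrime_prime _)) (prod_nonneg fun p hp => hnonneg p (hs' p hp))

lemma primorialSeq_mono : Monotone primorialSeq := fun _ _ h =>
  prod_le_prod_of_subset_of_one_le' (range_subset_range.2 h)
    fun i _ _ => (nthPrime_prime i).one_le

lemma primorialSeq_card_primeFactors_le {m : ℕ} (hm : m ≠ 0) :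
    primorialSeq #m.primeFactors ≤ m :=
  (prod_range_nthPrime_le_prod monotoneOn_id (fun p _ => p.zero_le) m.primeFactors
      fun _ hp => Nat.prime_of_mem_primeFactors hp).trans
    (Nat.le_of_dvd (Nat.pos_of_ne_zero hm) (Nat.prod_primeFactors_dvd m))

lemma card_primeFactors_lt_of_lt_primorialSeq {m n : ℕ} (hm : m ≠ 0)
    (hlt : m < primorialSeq n) : #m.primeFactors < n := by
  by_contra! hn
  exact (primorialSeq_mono hn).trans (primorialSeq_card_primeFactors_le hm) |>.not_gt hlt

lemma phiBar_eq_prod_primeFactors {m : ℕ} (hm : m ≠ 0) :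
    phiBar m = ∏ p ∈ m.primeFactors, (1 - (p : ℚ)⁻¹) := by
  rw [phiBar, Nat.totient_eq_mul_prod_factors, mul_div_right_comm,
    div_self (Nat.cast_ne_zero.2 hm), one_mul]

lemma phiBar_primorialSeq (n : ℕ) :
    phiBar (primorialSeq n) = ∏ i ∈ range n, (1 - (nthPrime i : ℚ)⁻¹) := by
  have hinj : Set.InjOn nthPrime (range n) := nthPrime_injective.injOn
  have hprime : ∀ p ∈ (range n).image nthPrime, p.Prime := by
    simpa using fun i _ => nthPrime_prime i
  have hP : primorialSeq n = ∏ p ∈ (range n).image nthPrime, p :=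
    (prod_image (f := id) hinj).symm
  rw [phiBar_eq_prod_primeFactors (hP ▸ prod_ne_zero_iff.2 fun p hp => (hprime p hp).ne_zero),
    hP, Nat.primeFactors_prod hprime, prod_image hinj]

lemma one_sub_inv_prime_pos {p : ℕ} (hp : p.Prime) : (0 : ℚ) < 1 - (p : ℚ)⁻¹ := by
  have : (p : ℚ)⁻¹ < 1 := inv_lt_one_of_one_lt₀ (by exact_mod_cast hp.one_lt)
  linarith

lemma monotoneOn_one_sub_inv : MonotoneOn (fun p : ℕ => 1 - (p : ℚ)⁻¹) {p | p.Prime} :=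
  fun p hp _ _ hpq => sub_le_sub_left
    (inv_anti₀ (by exact_mod_cast hp.pos) (by exact_mod_cast hpq)) 1

lemma phiBar_primorialSeq_strictAnti : StrictAnti (fun n => phiBar (primorialSeq n)) := by
  refine strictAnti_nat_of_succ_lt fun n => ?_
  have hpos : 0 < ∏ i ∈ range n, (1 - (nthPrime i : ℚ)⁻¹) :=
    prod_pos fun i _ => one_sub_inv_prime_pos (nthPrime_prime i)
  have hp : (0 : ℚ) < (nthPrime n : ℚ)⁻¹ := inv_pos.2 (by exact_mod_cast (nthPrime_prime n).pos)
  rw [phiBar_primorialSeq, phiBar_primorialSeq, prod_range_succ]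
  exact mul_lt_of_lt_one_right hpos (sub_lt_self 1 hp)

lemma phiBar_primorialSeq_card_primeFactors_le {m : ℕ} (hm : m ≠ 0) :
    phiBar (primorialSeq #m.primeFactors) ≤ phiBar m := by
  rw [phiBar_primorialSeq, phiBar_eq_prod_primeFactors hm]
  exact prod_range_nthPrime_le_prod monotoneOn_one_sub_inv
    (fun p hp => (one_sub_inv_prime_pos hp).le) _ fun _ hp => Nat.prime_of_mem_primeFactors hp

theorem sylvester_stmt15 (n m : ℕ) (hm : 1 ≤ m) (hlt : m < primorialSeq n) :
    phiBar (primorialSeq n) < phiBar m := by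
  have hm0 : m ≠ 0 := Nat.one_le_iff_ne_zero.1 hm
  calc phiBar (primorialSeq n)
      < phiBar (primorialSeq #m.primeFactors) :=
        phiBar_primorialSeq_strictAnti (card_primeFactors_lt_of_lt_primorialSeq hm0 hlt)
    _ ≤ phiBar m := phiBar_primorialSeq_card_primeFactors_le hm0
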